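/- Let G be a strongly connected simple digraph on n ≥ 2 vertices, u,v ∈ V(G) with (u,v) ∉ E(G), and 0 ≤ α < 1. Then μ_α(G) > μ_α(G + (u,v)), i.e., adding an arc strictly decreases the D_α spectral radius. -/

import Mathlib

open Matrix BigOperators

/-- Spectral radius of a real square matrix: the largest modulus of its complex eigenvalues. -/
noncomputable def specRad {n : ℕ} (M : Matrix (Fin n) (Fin n) ℝ) : ℝ :=
  sSup {r : ℝ | ∃ μ ∈ spectrum ℂ (M.map (fun x => (x : ℂ))), r = ‖μ‖}

/-- A matrix is irreducible iff its associated digraph is strongly connected. -/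
def Irred {n : ℕ} (M : Matrix (Fin n) (Fin n) ℝ) : Prop :=
  ∀ i j : Fin n, Relation.ReflTransGen (fun a b => M a b ≠ 0) i j

/-- A directed walk of length `k` from `i` to `j` in a digraph. -/
def DWalk {n : ℕ} (G : Digraph (Fin n)) (i j : Fin n) (k : ℕ) : Prop :=
  ∃ f : ℕ → Fin n, f 0 = i ∧ f k = j ∧ ∀ l < k, G.Adj (f l) (f (l + 1))

/-- A digraph is strongly connected iff every vertex can reach every vertex. -/
def SConn {n : ℕ} (G : Digraph (Fin n)) : Prop :=
  ∀ i j : Fin n, ∃ k : ℕ, DWalk G i j k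

/-- A simple digraph has no loops. -/
def Loopless {n : ℕ} (G : Digraph (Fin n)) : Prop := ∀ i : Fin n, ¬ G.Adj i i

/-- Directed distance from `i` to `j`. -/
noncomputable def ddist {n : ℕ} (G : Digraph (Fin n)) (i j : Fin n) : ℕ :=
  sInf {k : ℕ | DWalk G i j k}

/-- Transmission of vertex `i`: sum of distances from `i` to all vertices. -/
noncomputable def transm {n : ℕ} (G : Digraph (Fin n)) (i : Fin n) : ℝ :=
  ∑ j : Fin n, (ddist G i j : ℝ)

/-- The generalized distance matrix `D_α(G) = α·Diag(Tr) + (1-α)·D(G)`. -/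
noncomputable def Dalpha {n : ℕ} (α : ℝ) (G : Digraph (Fin n)) : Matrix (Fin n) (Fin n) ℝ :=
  α • Matrix.diagonal (transm G) + (1 - α) • (Matrix.of fun i j => (ddist G i j : ℝ))

/-- The `D_α` spectral radius of a digraph. -/
noncomputable def mualpha {n : ℕ} (α : ℝ) (G : Digraph (Fin n)) : ℝ :=
  specRad (Dalpha α G)

/-- Isomorphism of digraphs on `Fin n`. -/
def IsoD {n : ℕ} (G H : Digraph (Fin n)) : Prop :=
  ∃ e : Fin n ≃ Fin n, ∀ i j : Fin n, G.Adj i j ↔ H.Adj (e i) (e j)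

/-- The digraph `K(n,k,m)`: vertices `0..k-1` form `K↔ₖ`, `k..k+m-1` form `K↔ₘ`,
`k+m..n-1` form `K↔_{n-k-m}`; all arcs present except those from `K↔_{n-k-m}` to `K↔ₘ`. -/
def KD (n k m : ℕ) : Digraph (Fin n) :=
  ⟨fun i j => i ≠ j ∧ ¬(k + m ≤ (i : ℕ) ∧ k ≤ (j : ℕ) ∧ (j : ℕ) < k + m)⟩

/-- A directed walk staying inside a vertex set `A`. -/
def DWalkIn {n : ℕ} (G : Digraph (Fin n)) (A : Set (Fin n)) (i j : Fin n) (k : ℕ) : Prop :=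
  ∃ f : ℕ → Fin n, f 0 = i ∧ f k = j ∧ (∀ l ≤ k, f l ∈ A) ∧ ∀ l < k, G.Adj (f l) (f (l + 1))

/-- The induced subdigraph on `A` is strongly connected. -/
def SCOn {n : ℕ} (G : Digraph (Fin n)) (A : Set (Fin n)) : Prop :=
  ∀ i ∈ A, ∀ j ∈ A, ∃ k : ℕ, DWalkIn G A i j k

/-! Adding the arc only shortens distances, and it shortens `d(u,v)` from at least `2` to `1`, so
`B = D_α(G + (u,v))` is entrywise dominated by `A = D_α(G)`, strictly at `(u,v)`. Since `u` and `v`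
are not adjacent, a shortest `u`–`v` walk passes through a third vertex, so `n ≥ 3`; together with
the positive off-diagonal entries of `B` this makes `B²` positive, and then the identity
`A⁵ - B⁵ = A³(A² - B²) + A²(A - B)B² + (A² - B²)B³` makes `A⁵ - B⁵` positive. Hence
`B⁵ ≤ (1 - δ) A⁵` entrywise for some `δ > 0`, and since Gelfand's formula makes the spectral radius
monotone on nonnegative matrices, `ρ(B)⁵ ≤ (1 - δ) ρ(A)⁵ < ρ(A)⁵`. -/

namespace Matrix

section EntrywiseOrder

variable {ι R : Type*} [Fintype ι] [Semiring R] [PartialOrder R] [IsOrderedRing R]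

theorem mul_apply_nonneg {m o : Type*} {A : Matrix m ι R} {B : Matrix ι o R}
    (hA : ∀ i j, 0 ≤ A i j) (hB : ∀ i j, 0 ≤ B i j) (i : m) (j : o) : 0 ≤ (A * B) i j :=
  Finset.sum_nonneg fun l _ => mul_nonneg (hA i l) (hB l j)

theorem mul_apply_le_mul_apply {m o : Type*} {A B : Matrix m ι R} {C D : Matrix ι o R}
    (hA : ∀ i j, 0 ≤ A i j) (hC : ∀ i j, 0 ≤ C i j) (hAB : ∀ i j, A i j ≤ B i j)
    (hCD : ∀ i j, C i j ≤ D i j) (i : m) (j : o) : (A * C) i j ≤ (B * D) i j :=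
  Finset.sum_le_sum fun k _ => mul_le_mul (hAB i k) (hCD k j) (hC k j) ((hA i k).trans (hAB i k))

theorem pow_apply_le_pow_apply [DecidableEq ι] {A B : Matrix ι ι R} (hA : ∀ i j, 0 ≤ A i j)
    (hAB : ∀ i j, A i j ≤ B i j) (k : ℕ) (i j : ι) : (A ^ k) i j ≤ (B ^ k) i j := by
  induction k generalizing i j with
  | zero => exact le_rfl
  | succ k ih =>
    rw [pow_succ, pow_succ]
    exact mul_apply_le_mul_apply (pow_apply_nonneg hA k) hA ih hAB i j

end EntrywiseOrder

section EntrywisePositivity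

variable {ι R : Type*} [Fintype ι] [Ring R] [PartialOrder R] [IsStrictOrderedRing R]

theorem mul_apply_pos {m o : Type*} {A : Matrix m ι R} {B : Matrix ι o R}
    (hA : ∀ i j, 0 ≤ A i j) (hB : ∀ i j, 0 ≤ B i j) {i : m} {j : o} {k : ι}
    (hik : 0 < A i k) (hkj : 0 < B k j) : 0 < (A * B) i j :=
  (mul_pos hik hkj).trans_le <| Finset.single_le_sum (f := fun l => A i l * B l j)
    (fun l _ => mul_nonneg (hA i l) (hB l j)) (Finset.mem_univ k)

variable [DecidableEq ι]

theorem sq_apply_pos (hcard : 2 < Fintype.card ι) {A : Matrix ι ι R} (hA : ∀ i j, 0 ≤ A i j)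
    (hA' : ∀ i j, i ≠ j → 0 < A i j) (i j : ι) : 0 < (A ^ 2) i j := by
  obtain ⟨k, -, hk⟩ := Finset.exists_mem_notMem_of_card_lt_card (s := {i, j}) (t := Finset.univ)
    ((Finset.card_le_two).trans_lt hcard)
  rw [Finset.mem_insert, Finset.mem_singleton, not_or] at hk
  rw [sq]
  exact mul_apply_pos hA hA (hA' i k (Ne.symm hk.1)) (hA' k j hk.2)

theorem pow_five_sub_pow_five_apply_pos {A B : Matrix ι ι R} (hB : ∀ i j, 0 ≤ B i j)
    (hBA : ∀ i j, B i j ≤ A i j) (hB2 : ∀ i j, 0 < (B ^ 2) i j) {u v : ι} (huv : B u v < A u v)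
    (i j : ι) : 0 < (A ^ 5 - B ^ 5) i j := by
  have hA : ∀ i j, 0 ≤ A i j := fun i j => (hB i j).trans (hBA i j)
  have hA2 : ∀ i j, 0 < (A ^ 2) i j := fun i j =>
    (hB2 i j).trans_le (pow_apply_le_pow_apply hB hBA 2 i j)
  have hC : ∀ i j, 0 ≤ (A - B) i j := fun i j => sub_nonneg.mpr (hBA i j)
  have hD : ∀ i j, 0 ≤ (A ^ 2 - B ^ 2) i j := fun i j =>
    sub_nonneg.mpr (pow_apply_le_pow_apply hB hBA 2 i j)
  have hidentity : A ^ 5 - B ^ 5 =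
      A ^ 3 * (A ^ 2 - B ^ 2) + A ^ 2 * (A - B) * B ^ 2 + (A ^ 2 - B ^ 2) * B ^ 3 := by
    noncomm_ring
  have hmid : 0 < (A ^ 2 * (A - B) * B ^ 2) i j :=
    mul_apply_pos (mul_apply_nonneg (fun _ _ => (hA2 _ _).le) hC) (fun _ _ => (hB2 _ _).le)
      (mul_apply_pos (fun _ _ => (hA2 _ _).le) hC (hA2 i u) (sub_pos.mpr huv)) (hB2 v j)
  rw [hidentity, add_apply, add_apply]
  exact add_pos_of_pos_of_nonneg
    (add_pos_of_nonneg_of_pos (mul_apply_nonneg (pow_apply_nonneg hA 3) hD i j) hmid)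
    (mul_apply_nonneg hD (pow_apply_nonneg hB 3) i j)

end EntrywisePositivity

end Matrix

open Filter Topology
open scoped NNReal ENNReal

theorem spectrum.spectralRadius_pow {A : Type*} [NormedRing A] [NormedAlgebra ℂ A]
    [CompleteSpace A] [Nontrivial A] (a : A) (k : ℕ) :
    spectralRadius ℂ (a ^ k) = spectralRadius ℂ a ^ k := by
  refine le_antisymm (iSup₂_le fun z hz => ?_) (spectralRadius_pow_le' a k)
  obtain ⟨μ, hμ, rfl⟩ := spectrum.map_pow a k ▸ hz
  rw [nnnorm_pow, ENNReal.coe_pow]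
  exact pow_le_pow_left₀ zero_le (le_iSup₂ (f := fun x (_ : x ∈ spectrum ℂ a) =>
    (‖x‖₊ : ℝ≥0∞)) μ hμ) k

theorem exists_pos_mul_le_of_pos {α : Type*} [Finite α] {f g : α → ℝ} (hf : ∀ x, 0 < f x)
    (hg : ∀ x, 0 < g x) : ∃ δ > 0, ∀ x, δ * g x ≤ f x := by
  cases isEmpty_or_nonempty α
  · exact ⟨1, one_pos, isEmptyElim⟩
  obtain ⟨x₀, hx₀⟩ := Finite.exists_min fun x => f x / g x
  exact ⟨f x₀ / g x₀, div_pos (hf x₀) (hg x₀), fun x => (le_div_iff₀ (hg x)).mp (hx₀ x)⟩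

section SpectralRadius

attribute [local instance] Matrix.linftyOpNormedAddCommGroup Matrix.linftyOpNormedRing
  Matrix.linftyOpNormedAlgebra

theorem Matrix.linfty_opNorm_map_ofReal {m ι : Type*} [Fintype m] [Fintype ι]
    (M : Matrix m ι ℝ) : ‖M.map ((↑) : ℝ → ℂ)‖ = ‖M‖ := by
  simp [Matrix.linfty_opNorm_def, Complex.nnnorm_real]

theorem Matrix.linfty_opNorm_le_of_nonneg_of_le {m ι : Type*} [Fintype m] [Fintype ι]
    {P Q : Matrix m ι ℝ} (hP : ∀ i j, 0 ≤ P i j) (hPQ : ∀ i j, P i j ≤ Q i j) : ‖P‖ ≤ ‖Q‖ := by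
  simp only [Matrix.linfty_opNorm_def, NNReal.coe_le_coe]
  refine Finset.sup_mono_fun fun i _ => Finset.sum_le_sum fun j _ => ?_
  rw [← NNReal.coe_le_coe, coe_nnnorm, coe_nnnorm, Real.norm_of_nonneg (hP i j),
    Real.norm_of_nonneg ((hP i j).trans (hPQ i j))]
  exact hPQ i j

variable {n : ℕ} [NeZero n]

theorem specRad_eq_toReal_spectralRadius (M : Matrix (Fin n) (Fin n) ℝ) :
    specRad M = (spectralRadius ℂ (M.map ((↑) : ℝ → ℂ))).toReal := by
  obtain ⟨z, hz, hzr⟩ := spectrum.exists_nnnorm_eq_spectralRadius (M.map ((↑) : ℝ → ℂ))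
  rw [← hzr, ENNReal.coe_toReal, coe_nnnorm]
  refine IsGreatest.csSup_eq ⟨⟨z, hz, rfl⟩, ?_⟩
  rintro r ⟨μ, hμ, rfl⟩
  have : (‖μ‖₊ : ℝ≥0∞) ≤ ‖z‖₊ := hzr ▸ le_iSup₂ (f := fun x (_ : x ∈ spectrum ℂ _) =>
    (‖x‖₊ : ℝ≥0∞)) μ hμ
  exact_mod_cast this

theorem specRad_nonneg (M : Matrix (Fin n) (Fin n) ℝ) : 0 ≤ specRad M := by
  rw [specRad_eq_toReal_spectralRadius]
  exact ENNReal.toReal_nonneg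

theorem specRad_one : specRad (1 : Matrix (Fin n) (Fin n) ℝ) = 1 := by
  rw [specRad_eq_toReal_spectralRadius, Matrix.map_one _ Complex.ofReal_zero Complex.ofReal_one,
    spectrum.spectralRadius_one, ENNReal.toReal_one]

theorem specRad_pow (M : Matrix (Fin n) (Fin n) ℝ) (k : ℕ) : specRad (M ^ k) = specRad M ^ k := by
  rw [specRad_eq_toReal_spectralRadius, specRad_eq_toReal_spectralRadius, ← ENNReal.toReal_pow,
    ← spectrum.spectralRadius_pow]
  congr 2
  exact map_pow Complex.ofRealHom.mapMatrix M k

theorem tendsto_norm_pow_rpow_specRad (M : Matrix (Fin n) (Fin n) ℝ) :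
    Tendsto (fun k : ℕ => ‖M ^ k‖ ^ (1 / k : ℝ)) atTop (𝓝 (specRad M)) := by
  have hne : spectralRadius ℂ (M.map ((↑) : ℝ → ℂ)) ≠ ⊤ :=
    ne_top_of_le_ne_top ENNReal.coe_ne_top (spectrum.spectralRadius_le_nnnorm _)
  rw [specRad_eq_toReal_spectralRadius]
  refine ((ENNReal.tendsto_toReal hne).comp
    (spectrum.pow_norm_pow_one_div_tendsto_nhds_spectralRadius _)).congr fun k => ?_
  rw [Function.comp_apply, ENNReal.toReal_ofReal (by positivity),
    ← Matrix.linfty_opNorm_map_ofReal (M ^ k)]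
  exact congrArg (‖·‖ ^ (1 / k : ℝ)) (map_pow Complex.ofRealHom.mapMatrix M k).symm

theorem specRad_smul {c : ℝ} (hc : 0 ≤ c) (M : Matrix (Fin n) (Fin n) ℝ) :
    specRad (c • M) = c * specRad M := by
  refine tendsto_nhds_unique (tendsto_norm_pow_rpow_specRad (c • M))
    (((tendsto_norm_pow_rpow_specRad M).const_mul c).congr' ?_)
  filter_upwards [eventually_ne_atTop 0] with k hk
  rw [smul_pow, norm_smul, Real.norm_of_nonneg (pow_nonneg hc k),
    Real.mul_rpow (pow_nonneg hc k) (norm_nonneg _), ← Real.rpow_natCast,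
    ← Real.rpow_mul hc, mul_one_div_cancel (Nat.cast_ne_zero.mpr hk), Real.rpow_one]

theorem specRad_le_specRad {P Q : Matrix (Fin n) (Fin n) ℝ} (hP : ∀ i j, 0 ≤ P i j)
    (hPQ : ∀ i j, P i j ≤ Q i j) : specRad P ≤ specRad Q :=
  le_of_tendsto_of_tendsto' (tendsto_norm_pow_rpow_specRad P) (tendsto_norm_pow_rpow_specRad Q)
    fun k => Real.rpow_le_rpow (norm_nonneg _)
      (Matrix.linfty_opNorm_le_of_nonneg_of_le (Matrix.pow_apply_nonneg hP k)
        (Matrix.pow_apply_le_pow_apply hP hPQ k)) (by positivity)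

theorem specRad_pos {M : Matrix (Fin n) (Fin n) ℝ} (hM : ∀ i j, 0 ≤ M i j)
    (hdiag : ∀ i, 0 < M i i) : 0 < specRad M := by
  obtain ⟨c, hc, hcM⟩ := exists_pos_mul_le_of_pos hdiag fun _ => one_pos
  have hscalar : ∀ i j, (c • (1 : Matrix (Fin n) (Fin n) ℝ)) i j ≤ M i j := by
    intro i j
    rcases eq_or_ne i j with rfl | hij
    · simpa using hcM i
    · simpa [Matrix.one_apply_ne hij] using hM i j
  have hscalar_nonneg : ∀ i j, 0 ≤ (c • (1 : Matrix (Fin n) (Fin n) ℝ)) i j := fun i j => by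
    rw [Matrix.smul_apply, Matrix.one_apply]
    split_ifs <;> simp [hc.le]
  calc 0 < c := hc
    _ = specRad (c • (1 : Matrix (Fin n) (Fin n) ℝ)) := by
      rw [specRad_smul hc.le, specRad_one, mul_one]
    _ ≤ specRad M := specRad_le_specRad hscalar_nonneg hscalar

theorem specRad_lt_specRad_of_pow_sub_pos {A B : Matrix (Fin n) (Fin n) ℝ}
    (hB : ∀ i j, 0 ≤ B i j) {m : ℕ} (hpos : ∀ i j, 0 < (A ^ m - B ^ m) i j) :
    specRad B < specRad A := by
  have hBm : ∀ i j, 0 ≤ (B ^ m) i j := Matrix.pow_apply_nonneg hB m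
  have hAm : ∀ i j, 0 < (A ^ m) i j := fun i j =>
    (hpos i j).trans_le (by simpa [Matrix.sub_apply] using hBm i j)
  obtain ⟨δ, hδ, hδA⟩ := exists_pos_mul_le_of_pos (fun p : Fin n × Fin n => hpos p.1 p.2)
    fun p => hAm p.1 p.2
  have hBA : ∀ i j, (B ^ m) i j ≤ ((1 - δ) • A ^ m) i j := fun i j => by
    have := hδA (i, j)
    simp only [Matrix.sub_apply] at this
    simp only [Matrix.smul_apply, smul_eq_mul]
    linarith
  have hδ1 : 0 ≤ 1 - δ := by
    have := (hBm 0 0).trans (hBA 0 0)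
    simp only [Matrix.smul_apply, smul_eq_mul] at this
    exact nonneg_of_mul_nonneg_left this (hAm 0 0)
  have hApos : 0 < specRad A ^ m := by
    rw [← specRad_pow]
    exact specRad_pos (fun i j => (hAm i j).le) fun i => hAm i i
  have hle : specRad B ^ m ≤ (1 - δ) * specRad A ^ m := by
    rw [← specRad_pow, ← specRad_pow, ← specRad_smul hδ1]
    exact specRad_le_specRad hBm hBA
  refine lt_of_pow_lt_pow_left₀ m (specRad_nonneg A) (hle.trans_lt ?_)
  linarith [mul_pos hδ hApos]

end SpectralRadius

section Distance

variable {n : ℕ} {G H : Digraph (Fin n)} {i j : Fin n} {k : ℕ}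

theorem DWalk.mono (hGH : G ≤ H) : DWalk G i j k → DWalk H i j k
  | ⟨f, hf0, hfk, hadj⟩ => ⟨f, hf0, hfk, fun l hl => hGH (hadj l hl)⟩

theorem SConn.mono (hG : SConn G) (hGH : G ≤ H) : SConn H :=
  fun i j => (hG i j).imp fun _ => DWalk.mono hGH

theorem dWalk_zero_iff : DWalk G i j 0 ↔ i = j :=
  ⟨fun ⟨f, hf0, hfk, _⟩ => hf0 ▸ hfk, fun h => ⟨fun _ => i, rfl, h.symm ▸ rfl, by simp⟩⟩

theorem dWalk_one_iff : DWalk G i j 1 ↔ G.Adj i j := by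
  refine ⟨fun ⟨f, hf0, hf1, hadj⟩ => hf0 ▸ hf1 ▸ hadj 0 one_pos, fun h => ?_⟩
  exact ⟨fun l => if l = 0 then i else j, rfl, rfl, fun l hl => by simpa [Nat.lt_one_iff.mp hl]⟩

theorem ddist_le (h : DWalk G i j k) : ddist G i j ≤ k :=
  Nat.sInf_le h

theorem SConn.dWalk_ddist (hG : SConn G) (i j : Fin n) : DWalk G i j (ddist G i j) :=
  Nat.sInf_mem (hG i j)

theorem SConn.ddist_anti (hG : SConn G) (hGH : G ≤ H) : ddist H i j ≤ ddist G i j :=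
  ddist_le ((hG.dWalk_ddist i j).mono hGH)

theorem SConn.ddist_ne_zero (hG : SConn G) (hij : i ≠ j) : ddist G i j ≠ 0 := fun h =>
  hij (dWalk_zero_iff.mp (h ▸ hG.dWalk_ddist i j))

theorem SConn.ddist_eq_one (hG : SConn G) (hij : i ≠ j) (hadj : G.Adj i j) : ddist G i j = 1 := by
  have := ddist_le (dWalk_one_iff.mpr hadj)
  have := hG.ddist_ne_zero hij
  omega

theorem SConn.two_le_ddist (hG : SConn G) (hij : i ≠ j) (hnadj : ¬ G.Adj i j) :
    2 ≤ ddist G i j := by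
  have h0 := hG.ddist_ne_zero hij
  have h1 : ddist G i j ≠ 1 := fun h => hnadj (dWalk_one_iff.mp (h ▸ hG.dWalk_ddist i j))
  omega

theorem SConn.two_lt_of_not_adj (hG : SConn G) (hloop : Loopless G) (hij : i ≠ j)
    (hnadj : ¬ G.Adj i j) : 2 < n := by
  obtain ⟨f, hf0, -, hadj⟩ := hG.dWalk_ddist i j
  have hstep : G.Adj i (f 1) := hf0 ▸ hadj 0 (by have := hG.two_le_ddist hij hnadj; omega)
  rw [← Fintype.card_fin n, Fintype.two_lt_card_iff]
  exact ⟨i, j, f 1, hij, fun h => hloop i (h ▸ hstep), fun h => hnadj (h ▸ hstep)⟩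

end Distance

section DistanceMatrix

variable {n : ℕ} {α : ℝ} {G H : Digraph (Fin n)} {i j : Fin n}

theorem Dalpha_apply (α : ℝ) (G : Digraph (Fin n)) (i j : Fin n) :
    Dalpha α G i j = α * Matrix.diagonal (transm G) i j + (1 - α) * ddist G i j :=
  rfl

theorem Dalpha_apply_of_ne (hij : i ≠ j) : Dalpha α G i j = (1 - α) * ddist G i j := by
  simp [Dalpha_apply, Matrix.diagonal_apply_ne _ hij]

theorem Dalpha_nonneg (h0 : 0 ≤ α) (h1 : α ≤ 1) (i j : Fin n) : 0 ≤ Dalpha α G i j := by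
  have : 0 ≤ Matrix.diagonal (transm G) i j := by
    rw [Matrix.diagonal_apply]
    split_ifs
    exacts [Finset.sum_nonneg fun _ _ => Nat.cast_nonneg _, le_rfl]
  rw [Dalpha_apply]
  exact add_nonneg (mul_nonneg h0 this) (mul_nonneg (by linarith) (Nat.cast_nonneg _))

theorem SConn.Dalpha_pos (hG : SConn G) (h1 : α < 1) (hij : i ≠ j) : 0 < Dalpha α G i j := by
  rw [Dalpha_apply_of_ne hij]
  exact mul_pos (by linarith) (Nat.cast_pos.mpr (Nat.pos_of_ne_zero (hG.ddist_ne_zero hij)))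

theorem SConn.Dalpha_anti (hG : SConn G) (hGH : G ≤ H) (h0 : 0 ≤ α) (h1 : α ≤ 1)
    (i j : Fin n) : Dalpha α H i j ≤ Dalpha α G i j := by
  have hd : ∀ i j, (ddist H i j : ℝ) ≤ ddist G i j := fun i j =>
    Nat.cast_le.mpr (hG.ddist_anti hGH)
  have htr : Matrix.diagonal (transm H) i j ≤ Matrix.diagonal (transm G) i j := by
    simp only [Matrix.diagonal_apply]
    split_ifs
    exacts [Finset.sum_le_sum fun _ _ => hd _ _, le_rfl]
  rw [Dalpha_apply, Dalpha_apply]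
  exact add_le_add (mul_le_mul_of_nonneg_left htr h0)
    (mul_le_mul_of_nonneg_left (hd i j) (by linarith))

end DistanceMatrix

theorem stmt6_general {n : ℕ} (G : Digraph (Fin n)) (hG : Loopless G) (hsc : SConn G)
    (u v : Fin n) (huv : u ≠ v) (hnadj : ¬ G.Adj u v)
    (α : ℝ) (h0 : 0 ≤ α) (h1 : α < 1) :
    mualpha α (Digraph.mk (fun i j => G.Adj i j ∨ (i = u ∧ j = v))) < mualpha α G := by
  set G' : Digraph (Fin n) := Digraph.mk (fun i j => G.Adj i j ∨ (i = u ∧ j = v))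
  have hGG' : G ≤ G' := fun _ _ => Or.inl
  have hsc' : SConn G' := hsc.mono hGG'
  have hn : 2 < n := hsc.two_lt_of_not_adj hG huv hnadj
  have : NeZero n := ⟨by omega⟩
  have hB : ∀ i j, 0 ≤ Dalpha α G' i j := Dalpha_nonneg h0 h1.le
  have hBA : ∀ i j, Dalpha α G' i j ≤ Dalpha α G i j := hsc.Dalpha_anti hGG' h0 h1.le
  have hstrict : Dalpha α G' u v < Dalpha α G u v := by
    rw [Dalpha_apply_of_ne huv, Dalpha_apply_of_ne huv, hsc'.ddist_eq_one huv (Or.inr ⟨rfl, rfl⟩)]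
    have hfar : ((1 : ℕ) : ℝ) < ddist G u v := by exact_mod_cast hsc.two_le_ddist huv hnadj
    exact mul_lt_mul_of_pos_left hfar (by linarith)
  have hB2 : ∀ i j, 0 < (Dalpha α G' ^ 2) i j :=
    Matrix.sq_apply_pos (by simpa using hn) hB fun _ _ => hsc'.Dalpha_pos h1
  exact specRad_lt_specRad_of_pow_sub_pos hB
    (Matrix.pow_five_sub_pow_five_apply_pos hB hBA hB2 hstrict)

theorem stmt6 {n : ℕ} (hn : 2 ≤ n) (G : Digraph (Fin n)) (hG : Loopless G) (hsc : SConn G)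
    (u v : Fin n) (huv : u ≠ v) (hnadj : ¬ G.Adj u v)
    (α : ℝ) (h0 : 0 ≤ α) (h1 : α < 1) :
    mualpha α (Digraph.mk (fun i j => G.Adj i j ∨ (i = u ∧ j = v))) < mualpha α G :=
  stmt6_general G hG hsc u v huv hnadj α h0 h1
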